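/- arXiv:2602.14617 — 4 statements merged into one kernel-verified Lean document; each statement's English description precedes it below -/
import Mathlib

section
/- There exists a constant C > 0, depending only on ν, such that for all 0 < s < t and x ∈ ℝ, |G_t(x) - G_s(x)| ≤ C (t-s) s^{-3/2} exp(-x²/(8νt)). -/
open Real MeasureTheory

/-- The heat kernel on ℝ with viscosity ν. -/
noncomputable def G (ν t x : ℝ) : ℝ :=
  (Real.sqrt (4 * Real.pi * ν * t))⁻¹ * Real.exp (-x ^ 2 / (4 * ν * t))

noncomputable def Dv (b τ : ℝ) : ℝ :=
  -(1 / (2 * Real.sqrt τ)) / (Real.sqrt τ) ^ 2 * Real.exp (-(b * τ⁻¹)) +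
    (Real.sqrt τ)⁻¹ * (Real.exp (-(b * τ⁻¹)) * (b * (τ ^ 2)⁻¹))

lemma hasDerivAt_aux (b τ : ℝ) (hτ : 0 < τ) :
    HasDerivAt (fun τ => (Real.sqrt τ)⁻¹ * Real.exp (-(b * τ⁻¹))) (Dv b τ) τ := by
  have hr : Real.sqrt τ ≠ 0 := by positivity
  have h1 : HasDerivAt (fun τ => (Real.sqrt τ)⁻¹)
      (-(1 / (2 * Real.sqrt τ)) / (Real.sqrt τ) ^ 2) τ :=
    (Real.hasDerivAt_sqrt hτ.ne').inv hr
  have h2 : HasDerivAt (fun τ : ℝ => -(b * τ⁻¹)) (b * (τ ^ 2)⁻¹) τ := by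
    have : HasDerivAt (fun y : ℝ => -(b * y⁻¹)) (-(b * -(τ ^ 2)⁻¹)) τ :=
      ((hasDerivAt_inv hτ.ne').const_mul b).neg
    convert this using 1
    ring
  exact h1.mul h2.exp

lemma rpow_neg_three_half (τ : ℝ) (hτ : 0 < τ) :
    τ ^ (-(3 / 2) : ℝ) = (Real.sqrt τ * τ)⁻¹ := by
  rw [Real.rpow_neg hτ.le]
  congr 1
  have h : ((3 : ℝ) / 2) = 1 / 2 + 1 := by norm_num
  rw [h, Real.rpow_add hτ, Real.rpow_one, ← Real.sqrt_eq_rpow]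

lemma Dv_bound (b τ : ℝ) (hb : 0 ≤ b) (hτ : 0 < τ) :
    |Dv b τ| ≤ 5 / 2 * τ ^ (-(3 / 2) : ℝ) * Real.exp (-(b / (2 * τ))) := by
  have hr : 0 < Real.sqrt τ := Real.sqrt_pos.mpr hτ
  set r := Real.sqrt τ with hrdef
  have hsq : r ^ 2 = τ := Real.sq_sqrt hτ.le
  set u := b / (2 * τ) with hudef
  have hu : 0 ≤ u := by positivity
  have hbu : b / τ = 2 * u := by rw [hudef]; field_simp
  have h2u : b * τ⁻¹ = u + u := by
    rw [hudef]; field_simp; ring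
  have hEeq : Real.exp (-(b * τ⁻¹)) = Real.exp (-u) * Real.exp (-u) := by
    rw [← Real.exp_add]; congr 1; rw [h2u]; ring
  have hexple : Real.exp (-u) ≤ 1 := Real.exp_le_one_iff.mpr (by linarith)
  have hE2 : Real.exp (-(b * τ⁻¹)) ≤ Real.exp (-u) := by
    rw [hEeq]
    nlinarith [Real.exp_pos (-u)]
  have key : u * Real.exp (-u) ≤ 1 := by
    have h1 := Real.add_one_le_exp u
    rw [Real.exp_neg]
    rw [mul_inv_le_iff₀ (Real.exp_pos u)]
    linarith
  have hbt : Real.exp (-(b * τ⁻¹)) * (b / τ) ≤ 2 * Real.exp (-u) := by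
    rw [hEeq, hbu]
    nlinarith [Real.exp_pos (-u), key]
  have hDv : Dv b τ = (r * τ)⁻¹ * (Real.exp (-(b * τ⁻¹)) * (b / τ - 1 / 2)) := by
    unfold Dv
    rw [← hrdef, ← hsq]
    have : (0:ℝ) < r := hr
    field_simp
    ring
  rw [rpow_neg_three_half τ hτ, hDv, abs_mul, abs_mul,
    abs_of_pos (by positivity : (0:ℝ) < (r * τ)⁻¹), Real.abs_exp]
  have habs : |b / τ - 1 / 2| ≤ b / τ + 1 / 2 := by
    have hd : 0 ≤ b / τ := by positivity
    rw [abs_le]; constructor <;> linarith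
  have hinner : Real.exp (-(b * τ⁻¹)) * |b / τ - 1 / 2| ≤ 5 / 2 * Real.exp (-u) := by
    calc Real.exp (-(b * τ⁻¹)) * |b / τ - 1 / 2|
        ≤ Real.exp (-(b * τ⁻¹)) * (b / τ + 1 / 2) :=
          mul_le_mul_of_nonneg_left habs (Real.exp_pos _).le
      _ = Real.exp (-(b * τ⁻¹)) * (b / τ) + Real.exp (-(b * τ⁻¹)) * (1 / 2) := by ring
      _ ≤ 2 * Real.exp (-u) + Real.exp (-u) * (1 / 2) := by
          have := hE2
          nlinarith
      _ = 5 / 2 * Real.exp (-u) := by ring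
  calc (r * τ)⁻¹ * (Real.exp (-(b * τ⁻¹)) * |b / τ - 1 / 2|)
      ≤ (r * τ)⁻¹ * (5 / 2 * Real.exp (-u)) :=
        mul_le_mul_of_nonneg_left hinner (by positivity)
    _ = 5 / 2 * (r * τ)⁻¹ * Real.exp (-(b / (2 * τ))) := by rw [hudef]; ring

/-- Time difference estimate for the heat kernel:
`|G_t(x) - G_s(x)| ≤ C (t-s) s^{-3/2} exp(-x²/(8νt))` for 0 < s < t. -/
theorem heat_kernel_time_difference_bound (ν : ℝ) (hν : 0 < ν) :
    ∃ C : ℝ, 0 < C ∧ ∀ s t : ℝ, 0 < s → s < t → ∀ x : ℝ,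
      |G ν t x - G ν s x| ≤
        C * (t - s) * s ^ (-(3 / 2) : ℝ) * Real.exp (-x ^ 2 / (8 * ν * t)) := by
  have hpi := Real.pi_pos
  set a := 4 * Real.pi * ν with hadef
  have ha : 0 < a := by positivity
  have hsa : 0 < Real.sqrt a := Real.sqrt_pos.mpr ha
  refine ⟨5 / 2 * (Real.sqrt a)⁻¹, by positivity, ?_⟩
  intro s t hs hst x
  set b := x ^ 2 / (4 * ν) with hbdef
  have hb : 0 ≤ b := by positivity
  -- rewrite G as a constant times the profile, for positive times
  have hG : ∀ τ : ℝ, 0 < τ → G ν τ x =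
      (Real.sqrt a)⁻¹ * ((Real.sqrt τ)⁻¹ * Real.exp (-(b * τ⁻¹))) := by
    intro τ hτ
    unfold G
    rw [hadef, Real.sqrt_mul (by positivity), mul_inv, mul_assoc]
    congr 2
    rw [hbdef]
    field_simp
  have hderiv : ∀ τ : ℝ, 0 < τ →
      HasDerivAt (fun τ => G ν τ x) ((Real.sqrt a)⁻¹ * Dv b τ) τ := by
    intro τ hτ
    have h := ((hasDerivAt_aux b τ hτ).const_mul ((Real.sqrt a)⁻¹))
    apply h.congr_of_eventuallyEq
    filter_upwards [Ioi_mem_nhds hτ] with y hy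
    rw [hG y hy]
  have hcont : ContinuousOn (fun τ => G ν τ x) (Set.Icc s t) := fun y hy =>
    ((hderiv y (lt_of_lt_of_le hs hy.1)).continuousAt).continuousWithinAt
  obtain ⟨τ, hτm, hslope⟩ := exists_hasDerivAt_eq_slope (fun τ => G ν τ x)
    (fun τ => (Real.sqrt a)⁻¹ * Dv b τ) hst hcont
    (fun y hy => hderiv y (lt_trans hs hy.1))
  have hτs : s < τ := hτm.1
  have hτt : τ < t := hτm.2
  have hτ : 0 < τ := lt_trans hs hτs
  have hts : (0:ℝ) < t - s := by linarith
  have heq : G ν t x - G ν s x = (t - s) * ((Real.sqrt a)⁻¹ * Dv b τ) := by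
    have h := (eq_div_iff hts.ne').mp hslope
    rw [← h]; ring
  -- the two monotonicity facts
  have h1 : τ ^ (-(3 / 2) : ℝ) ≤ s ^ (-(3 / 2) : ℝ) :=
    Real.rpow_le_rpow_of_nonpos hs hτs.le (by norm_num)
  have h2 : Real.exp (-(b / (2 * τ))) ≤ Real.exp (-x ^ 2 / (8 * ν * t)) := by
    apply Real.exp_le_exp.mpr
    rw [neg_div]
    apply neg_le_neg
    have hb2 : b / (2 * τ) = x ^ 2 / (8 * ν * τ) := by
      rw [hbdef, div_div]; congr 1; ring
    rw [hb2]
    have : 8 * ν * τ ≤ 8 * ν * t := by nlinarith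
    exact div_le_div_of_nonneg_left (by positivity) (by positivity) this
  have h3 := Dv_bound b τ hb hτ
  have h4 : |Dv b τ| ≤ 5 / 2 * s ^ (-(3 / 2) : ℝ) * Real.exp (-x ^ 2 / (8 * ν * t)) := by
    refine h3.trans ?_
    have hτp : 0 ≤ τ ^ (-(3 / 2) : ℝ) := Real.rpow_nonneg hτ.le _
    apply mul_le_mul (by nlinarith [Real.rpow_nonneg hs.le (-(3/2):ℝ)]) h2
      (Real.exp_pos _).le (by positivity)
  rw [heq, abs_mul, abs_of_pos hts, abs_mul,
    abs_of_pos (by positivity : (0:ℝ) < (Real.sqrt a)⁻¹)]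
  calc (t - s) * ((Real.sqrt a)⁻¹ * |Dv b τ|)
      ≤ (t - s) * ((Real.sqrt a)⁻¹ *
          (5 / 2 * s ^ (-(3 / 2) : ℝ) * Real.exp (-x ^ 2 / (8 * ν * t)))) := by
        apply mul_le_mul_of_nonneg_left _ hts.le
        exact mul_le_mul_of_nonneg_left h4 (by positivity)
    _ = 5 / 2 * (Real.sqrt a)⁻¹ * (t - s) * s ^ (-(3 / 2) : ℝ) *
          Real.exp (-x ^ 2 / (8 * ν * t)) := by ring
end

section
/- Singular Gronwall inequality: let T > 0, β > 0, a, b ≥ 0, and let f : [0, T] → [0, ∞) be a bounded measurable function satisfying f(t) ≤ a + b ∫_0^t (t-s)^{β-1} f(s) ds for all t ∈ [0, T]. Then for every t ∈ [0, T], f(t) ≤ a ∑_{k=0}^∞ (b Γ(β) t^β)^k / Γ(βk + 1), where the series on the right converges. -/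
open Real MeasureTheory


/-- Summability of the Mittag-Leffler series. -/
lemma ML_summable {β : ℝ} (hβ : 0 < β) {x : ℝ} (hx : 0 ≤ x) :
    Summable (fun k : ℕ => x ^ k / Real.Gamma (β * k + 1)) := by
  set u : ℕ → ℝ := fun k => x ^ k / Real.Gamma (β * k + 1) with hu
  have hpos : ∀ k : ℕ, 0 < Real.Gamma (β * k + 1) := fun k =>
    Real.Gamma_pos_of_pos (by positivity)
  have hunn : ∀ k, 0 ≤ u k := fun k => div_nonneg (by positivity) (hpos k).le
  -- choose m with 1 ≤ β * m
  obtain ⟨m, hm⟩ := exists_nat_ge (1 / β)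
  have hm1 : 1 ≤ β * m := by
    rw [← div_le_iff₀' hβ]; exact hm
  have hmpos : 0 < m := by
    by_contra h
    push_neg at h
    interval_cases m
    simp at hm1; nlinarith
  -- choose N with 2 * x^m ≤ β * N + 1 and 1 ≤ β*N
  obtain ⟨N, hN⟩ := exists_nat_ge (max (2 * x ^ m) 1 / β)
  have hN' : max (2 * x ^ m) 1 ≤ β * N := by
    rw [← div_le_iff₀' hβ]; exact hN
  -- key step
  have step : ∀ n : ℕ, N ≤ n → u (n + m) ≤ (1 / 2) * u n := by
    intro n hn
    have h2 : (2:ℝ) ≤ β * n + 2 := by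
      have : 0 ≤ β * n := by positivity
      linarith
    have hmono := Real.Gamma_strictMonoOn_Ici.monotoneOn
    have hle : Real.Gamma (β * n + 2) ≤ Real.Gamma (β * (n + m : ℕ) + 1) := by
      apply hmono (Set.mem_Ici.2 h2)
      · simp only [Set.mem_Ici]
        push_cast; nlinarith
      · push_cast; nlinarith
    have hrec : Real.Gamma (β * n + 2) = (β * n + 1) * Real.Gamma (β * n + 1) := by
      have : β * n + 2 = (β * n + 1) + 1 := by ring
      rw [this, Real.Gamma_add_one (by positivity)]
    have hxm : 2 * x ^ m ≤ β * n + 1 := by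
      have : (N:ℝ) ≤ n := by exact_mod_cast hn
      have := le_trans (le_max_left _ _) hN'
      nlinarith
    have h1 : u (n + m) = x ^ n * x ^ m / Real.Gamma (β * (n + m : ℕ) + 1) := by
      rw [hu]; simp [pow_add]
    rw [h1]
    have hG2 : 0 < Real.Gamma (β * n + 2) := Real.Gamma_pos_of_pos (by positivity)
    have hGnm : 0 < Real.Gamma (β * (n + m : ℕ) + 1) := Real.Gamma_pos_of_pos (by positivity)
    calc x ^ n * x ^ m / Real.Gamma (β * (n + m : ℕ) + 1)
        ≤ x ^ n * x ^ m / Real.Gamma (β * n + 2) := by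
          apply div_le_div_of_nonneg_left _ hG2 hle <;> positivity
      _ = x ^ n * x ^ m / ((β * n + 1) * Real.Gamma (β * n + 1)) := by rw [hrec]
      _ ≤ x ^ n * ((β * n + 1)/2) / ((β * n + 1) * Real.Gamma (β * n + 1)) := by
          apply div_le_div_of_nonneg_right ?_ (by positivity)
          · apply mul_le_mul_of_nonneg_left (by linarith) (by positivity)
      _ = (1/2) * u n := by
          rw [hu]
          field_simp
  -- iterate
  have iter : ∀ k n : ℕ, N ≤ n → u (n + k * m) ≤ (1/2) ^ k * u n := by
    intro k
    induction k with
    | zero => intro n hn; simp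
    | succ k ih =>
      intro n hn
      have h1 : n + (k+1) * m = (n + k * m) + m := by ring
      rw [h1]
      calc u ((n + k*m) + m) ≤ (1/2) * u (n + k*m) := step _ (le_trans hn (Nat.le_add_right _ _))
        _ ≤ (1/2) * ((1/2)^k * u n) := by
            have := ih n hn; linarith
        _ = (1/2)^(k+1) * u n := by ring
  -- geometric comparison
  set q : ℝ := (2:ℝ) ^ (-(1:ℝ)/m) with hq
  have hq0 : 0 < q := Real.rpow_pos_of_pos (by norm_num) _
  have hq1 : q < 1 := by
    apply Real.rpow_lt_one_of_one_lt_of_neg (by norm_num)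
    have : (0:ℝ) < m := by exact_mod_cast hmpos
    rw [neg_div]
    simp only [Left.neg_neg_iff]
    positivity
  set C : ℝ := ∑ j ∈ Finset.range m, u (N + j) with hC
  have hC0 : 0 ≤ C := Finset.sum_nonneg fun j _ => hunn _
  have hbound : ∀ n : ℕ, u (N + n) ≤ 2 * C * q ^ n := by
    intro n
    have h1 : N + n = (N + n % m) + (n / m) * m := by
      rw [add_assoc]
      congr 1
      exact (Nat.mod_add_div' n m).symm
    have h2 : u (N + n) ≤ (1/2)^(n/m) * u (N + n % m) := by
      rw [h1]; exact iter _ _ (Nat.le_add_right _ _)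
    have h3 : u (N + n % m) ≤ C := by
      rw [hC]
      apply Finset.single_le_sum (fun j _ => hunn (N + j))
      exact Finset.mem_range.2 (Nat.mod_lt _ hmpos)
    have h4 : ((1:ℝ)/2)^(n/m) ≤ 2 * q ^ n := by
      have hnm : (n:ℝ) < m * (n/m : ℕ) + m := by
        have h5 : n < m * (n/m) + m := by
          conv_lhs => rw [← Nat.div_add_mod n m]
          have := Nat.mod_lt n hmpos
          omega
        exact_mod_cast h5
      have e1 : ((1:ℝ)/2)^(n/m : ℕ) = (2:ℝ) ^ (-((n/m : ℕ) : ℝ)) := by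
        rw [one_div, inv_pow, ← Real.rpow_natCast 2 (n/m), ← Real.rpow_neg (by norm_num)]
      have e2 : (2:ℝ) * q ^ n = (2:ℝ) ^ (1 + (-(1:ℝ)/m) * n) := by
        rw [hq, ← Real.rpow_natCast ((2:ℝ) ^ (-(1:ℝ)/(m:ℝ))) n,
          ← Real.rpow_mul (by norm_num : (0:ℝ) ≤ 2)]
        rw [Real.rpow_add (by norm_num : (0:ℝ) < 2), Real.rpow_one]
      rw [e1, e2]
      apply Real.rpow_le_rpow_left_iff (x := 2) (by norm_num) |>.2
      have hm0 : (0:ℝ) < m := by exact_mod_cast hmpos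
      rw [neg_le]
      have h6 : -(1 + -1/(m:ℝ) * n) = (n:ℝ)/m - 1 := by field_simp; ring
      rw [h6, sub_le_iff_le_add, div_le_iff₀ hm0]
      nlinarith
    calc u (N + n) ≤ (1/2)^(n/m) * u (N + n % m) := h2
      _ ≤ (1/2)^(n/m) * C := by
          apply mul_le_mul_of_nonneg_left h3 (by positivity)
      _ ≤ (2 * q ^ n) * C := by
          apply mul_le_mul_of_nonneg_right h4 hC0
      _ = 2 * C * q ^ n := by ring
  have hgeo : Summable (fun n : ℕ => 2 * C * q ^ n) :=
    (summable_geometric_of_lt_one hq0.le hq1).mul_left _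
  apply (summable_nat_add_iff N).1
  refine Summable.of_nonneg_of_le (fun n => hunn _) (fun n => ?_) hgeo
  rw [Nat.add_comm]
  exact hbound n

lemma beta_real {u v : ℝ} (hu : 0 < u) (hv : 0 < v) {t : ℝ} (ht : 0 < t) :
    ∫ s in (0:ℝ)..t, s ^ (u - 1) * (t - s) ^ (v - 1) =
      t ^ (u + v - 1) * (Real.Gamma u * Real.Gamma v / Real.Gamma (u + v)) := by
  have hB := Complex.betaIntegral_scaled (u : ℂ) (v : ℂ) ht
  have hG := Complex.Gamma_mul_Gamma_eq_betaIntegral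
    (s := (u:ℂ)) (t := (v:ℂ)) (by simpa using hu) (by simpa using hv)
  have hGuv : Complex.Gamma ((u:ℂ) + v) ≠ 0 := by
    rw [show ((u:ℂ) + v) = ((u + v : ℝ) : ℂ) by push_cast; ring, Complex.Gamma_ofReal]
    exact_mod_cast (Real.Gamma_pos_of_pos (by linarith)).ne'
  have hbeta : Complex.betaIntegral u v =
      Complex.Gamma u * Complex.Gamma v / Complex.Gamma ((u:ℂ) + v) := by
    rw [eq_div_iff hGuv]
    linear_combination -hG
  -- relate LHS complex integral to real one
  have hL : (∫ s in (0:ℝ)..t, ((s ^ (u - 1) * (t - s) ^ (v - 1) : ℝ) : ℂ)) =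
      ∫ s in (0:ℝ)..t, (s : ℂ) ^ ((u:ℂ) - 1) * ((t : ℂ) - s) ^ ((v:ℂ) - 1) := by
    apply intervalIntegral.integral_congr
    intro s hs
    rw [Set.uIcc_of_le ht.le] at hs
    obtain ⟨hs0, hst⟩ := hs
    dsimp only
    rw [Complex.ofReal_mul, Complex.ofReal_cpow hs0,
      Complex.ofReal_cpow (by linarith : (0:ℝ) ≤ t - s)]
    push_cast
    ring
  rw [intervalIntegral.integral_ofReal] at hL
  have key : ((∫ s in (0:ℝ)..t, s ^ (u - 1) * (t - s) ^ (v - 1) : ℝ) : ℂ) =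
      ((t ^ (u + v - 1) * (Real.Gamma u * Real.Gamma v / Real.Gamma (u + v)) : ℝ) : ℂ) := by
    rw [hL, hB, hbeta]
    rw [show ((u:ℂ) + v - 1) = (((u + v - 1 : ℝ)) : ℂ) by push_cast; ring]
    rw [← Complex.ofReal_cpow ht.le]
    rw [show ((u:ℂ) + v) = ((u + v : ℝ) : ℂ) by push_cast; ring]
    rw [Complex.Gamma_ofReal, Complex.Gamma_ofReal, Complex.Gamma_ofReal]
    push_cast
    ring
  exact_mod_cast key

/-- The scaled Beta integral in the form needed for Gronwall. -/
lemma beta_kernel {β : ℝ} (hβ : 0 < β) {γ : ℝ} (hγ : 0 ≤ γ) {t : ℝ} (ht : 0 < t) :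
    ∫ s in (0:ℝ)..t, (t - s) ^ (β - 1) * s ^ γ =
      t ^ (γ + β) * (Real.Gamma (γ + 1) * Real.Gamma β / Real.Gamma (γ + 1 + β)) := by
  have h := beta_real (u := γ + 1) (v := β) (by linarith) hβ ht
  rw [show γ + 1 - 1 = γ by ring] at h
  rw [show γ + 1 + β - 1 = γ + β by ring] at h
  rw [← h]
  apply intervalIntegral.integral_congr
  intro s _
  ring

/-- Singular Gronwall inequality: if a bounded measurable nonnegative f on [0,T] satisfies
`f(t) ≤ a + b ∫_0^t (t-s)^{β-1} f(s) ds`, then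
`f(t) ≤ a ∑_{k≥0} (b Γ(β) t^β)^k / Γ(βk+1)`, the series (Mittag-Leffler) being convergent. -/
theorem singular_gronwall (T β a b : ℝ) (hT : 0 < T) (hβ : 0 < β)
    (ha : 0 ≤ a) (hb : 0 ≤ b) (f : ℝ → ℝ) (hmeas : Measurable f)
    (hbdd : ∃ M : ℝ, ∀ t ∈ Set.Icc (0 : ℝ) T, |f t| ≤ M)
    (hnonneg : ∀ t ∈ Set.Icc (0 : ℝ) T, 0 ≤ f t)
    (hineq : ∀ t ∈ Set.Icc (0 : ℝ) T,
      f t ≤ a + b * ∫ s in (0:ℝ)..t, (t - s) ^ (β - 1) * f s) :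
    ∀ t ∈ Set.Icc (0 : ℝ) T,
      Summable (fun k : ℕ => (b * Real.Gamma β * t ^ β) ^ k / Real.Gamma (β * k + 1)) ∧
      f t ≤ a * ∑' k : ℕ, (b * Real.Gamma β * t ^ β) ^ k / Real.Gamma (β * k + 1) := by
  obtain ⟨M, hM⟩ := hbdd
  have hM0 : 0 ≤ M := le_trans (abs_nonneg _) (hM 0 ⟨le_refl 0, hT.le⟩)
  set G := Real.Gamma β with hGdef
  have hGpos : 0 < G := Real.Gamma_pos_of_pos hβ
  have hGk : ∀ k : ℕ, 0 < Real.Gamma (β * k + 1) := fun k =>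
    Real.Gamma_pos_of_pos (by positivity)
  set g : ℝ → ℕ → ℝ := fun t k => (b * G * t ^ β) ^ k / Real.Gamma (β * k + 1) with hg
  -- kernel integrability
  have hker : ∀ t : ℝ, 0 ≤ t →
      IntervalIntegrable (fun s => (t - s) ^ (β - 1)) volume 0 t := by
    intro t ht
    have h := intervalIntegral.intervalIntegrable_rpow' (a := 0) (b := t) (r := β - 1)
      (by linarith)
    have h2 := h.comp_sub_left t
    have h3 : IntervalIntegrable (fun x => (t - x) ^ (β - 1)) volume t 0 := by simpa using h2
    exact h3.symm
  -- kernel times f integrability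
  have hkf : ∀ t ∈ Set.Icc (0:ℝ) T,
      IntervalIntegrable (fun s => (t - s) ^ (β - 1) * f s) volume 0 t := by
    rintro t ⟨ht0, htT⟩
    rw [intervalIntegrable_iff_integrableOn_Ioc_of_le ht0]
    have hkint : IntegrableOn (fun s => M * (t - s) ^ (β - 1)) (Set.Ioc 0 t) volume := by
      have h2 := ((hker t ht0).const_mul M)
      rwa [intervalIntegrable_iff_integrableOn_Ioc_of_le ht0] at h2
    apply Integrable.mono' hkint
    · apply Measurable.aestronglyMeasurable
      apply Measurable.mul _ hmeas
      fun_prop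
    · rw [ae_restrict_iff' measurableSet_Ioc]
      filter_upwards with s hs
      obtain ⟨hs0, hst⟩ := hs
      have h1 : (0:ℝ) ≤ t - s := by linarith
      rw [norm_mul, Real.norm_eq_abs, Real.norm_eq_abs,
        abs_of_nonneg (Real.rpow_nonneg h1 _), mul_comm M]
      exact mul_le_mul_of_nonneg_left (hM s ⟨hs0.le, le_trans hst htT⟩)
        (Real.rpow_nonneg h1 _)
  -- kernel times continuous integrability
  have hkg : ∀ t : ℝ, 0 ≤ t → ∀ c : ℝ → ℝ, Continuous c →
      IntervalIntegrable (fun s => (t - s) ^ (β - 1) * c s) volume 0 t :=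
    fun t ht c hc => (hker t ht).mul_continuousOn hc.continuousOn
  have hgcont : ∀ k : ℕ, Continuous (fun s : ℝ => g s k) := by
    intro k
    apply Continuous.div_const
    exact (continuous_const.mul (Real.continuous_rpow_const hβ.le)).pow k
  have hg0 : ∀ s : ℝ, g s 0 = 1 := by
    intro s; simp [hg, Real.Gamma_one]
  -- the key induction
  have key : ∀ n : ℕ, ∀ t ∈ Set.Icc (0:ℝ) T,
      f t ≤ a * (∑ k ∈ Finset.range n, g t k) + M * g t n := by
    intro n
    induction n with
    | zero =>
      rintro t ⟨ht0, htT⟩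
      rw [hg0]
      simp only [Finset.range_zero, Finset.sum_empty, mul_zero, zero_add, mul_one]
      exact le_trans (le_abs_self _) (hM t ⟨ht0, htT⟩)
    | succ n ih =>
      rintro t ⟨ht0, htT⟩
      rcases eq_or_lt_of_le ht0 with h0 | h0
      · -- t = 0
        have hgz : ∀ k : ℕ, g 0 (k+1) = 0 := by
          intro k
          simp [hg, Real.zero_rpow hβ.ne']
        have hf0 : f t ≤ a := by
          have h1 := hineq t ⟨ht0, htT⟩
          rw [← h0] at h1 ⊢
          rwa [intervalIntegral.integral_same, mul_zero, add_zero] at h1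
        rw [← h0]
        rw [Finset.sum_range_succ']
        rw [hg0, hgz]
        simp only [mul_zero, add_zero]
        calc f 0 ≤ a := by rw [← h0] at hf0; exact hf0
          _ ≤ a * ((∑ k ∈ Finset.range n, g 0 (k+1)) + 1) := by
              have : (∑ k ∈ Finset.range n, g 0 (k+1)) = 0 :=
                Finset.sum_eq_zero fun k _ => hgz k
              rw [this]; simp
      · -- 0 < t
        have hsub : Set.Icc (0:ℝ) t ⊆ Set.Icc 0 T := Set.Icc_subset_Icc le_rfl htT
        set φ : ℝ → ℝ := fun s => a * (∑ k ∈ Finset.range n, g s k) + M * g s n with hφ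
        have hφc : Continuous φ := by
          apply Continuous.add
          · exact continuous_const.mul (continuous_finset_sum _ fun k _ => hgcont k)
          · exact continuous_const.mul (hgcont n)
        have h1 : f t ≤ a + b * ∫ s in (0:ℝ)..t, (t - s) ^ (β - 1) * f s :=
          hineq t ⟨ht0, htT⟩
        have h2 : (∫ s in (0:ℝ)..t, (t - s) ^ (β - 1) * f s)
            ≤ ∫ s in (0:ℝ)..t, (t - s) ^ (β - 1) * φ s := by
          apply intervalIntegral.integral_mono_on ht0 (hkf t ⟨ht0, htT⟩) (hkg t ht0 φ hφc)
          intro s hs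
          have h3 : (0:ℝ) ≤ (t - s) ^ (β - 1) :=
            Real.rpow_nonneg (by linarith [hs.2]) _
          exact mul_le_mul_of_nonneg_left (ih s (hsub hs)) h3
        -- the single-term integral identity
        have hint : ∀ k : ℕ,
            b * ∫ s in (0:ℝ)..t, (t - s) ^ (β - 1) * g s k = g t (k+1) := by
          intro k
          have hγ : (0:ℝ) ≤ β * k := by positivity
          have e1 : (∫ s in (0:ℝ)..t, (t - s) ^ (β - 1) * g s k)
              = ((b*G)^k / Real.Gamma (β*k+1)) *
                ∫ s in (0:ℝ)..t, (t - s) ^ (β - 1) * s ^ (β * (k:ℝ)) := by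
            rw [← intervalIntegral.integral_const_mul]
            apply intervalIntegral.integral_congr
            intro s hs
            rw [Set.uIcc_of_le ht0] at hs
            have hs0 : (0:ℝ) ≤ s := hs.1
            have hsk : (s ^ β) ^ k = s ^ (β * (k:ℝ)) := by
              rw [← Real.rpow_natCast (s ^ β) k, ← Real.rpow_mul hs0]
            rw [hg]
            dsimp only
            rw [mul_pow, ← hsk]
            ring
          have e2 : (∫ s in (0:ℝ)..t, (t - s) ^ (β - 1) * s ^ (β * (k:ℝ)))
              = t ^ (β*(k:ℝ) + β) *
                (Real.Gamma (β*(k:ℝ)+1) * G / Real.Gamma (β*(k:ℝ)+1+β)) :=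
            beta_kernel hβ hγ h0
          rw [e1, e2, hg]
          dsimp only
          have h4 : ((k+1 : ℕ) : ℝ) = (k:ℝ) + 1 := by push_cast; ring
          have h5 : t ^ (β*(k:ℝ) + β) = (t ^ β) ^ (k+1) := by
            rw [show β*(k:ℝ)+β = β*((k:ℝ)+1) by ring, Real.rpow_mul ht0,
              ← Real.rpow_natCast (t ^ β) (k+1), h4]
          have h6 : β * ((k+1 : ℕ) : ℝ) + 1 = β*(k:ℝ)+1+β := by rw [h4]; ring
          rw [h5, h6, mul_pow]
          have hΓ1 : Real.Gamma (β*(k:ℝ)+1) ≠ 0 := by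
            have := hGk k; positivity
          have hΓ2 : Real.Gamma (β*(k:ℝ)+1+β) ≠ 0 := by
            have : (0:ℝ) < Real.Gamma (β*(k:ℝ)+1+β) :=
              Real.Gamma_pos_of_pos (by positivity)
            positivity
          field_simp
          ring
        -- linearity of the integral
        have hik : ∀ k : ℕ,
            IntervalIntegrable (fun s => (t - s)^(β-1) * g s k) volume 0 t :=
          fun k => hkg t ht0 _ (hgcont k)
        have h7 : (∫ s in (0:ℝ)..t, (t - s) ^ (β - 1) * φ s)
            = a * (∑ k ∈ Finset.range n, ∫ s in (0:ℝ)..t, (t-s)^(β-1) * g s k)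
              + M * ∫ s in (0:ℝ)..t, (t-s)^(β-1) * g s n := by
          have e3 : ∀ s, (t-s)^(β-1) * φ s =
              (∑ k ∈ Finset.range n, a * ((t-s)^(β-1) * g s k))
                + M * ((t-s)^(β-1) * g s n) := by
            intro s
            rw [hφ]
            dsimp only
            rw [mul_add, mul_left_comm, Finset.mul_sum, Finset.mul_sum]
            congr 1
            ring
          rw [intervalIntegral.integral_congr (fun s _ => e3 s)]
          have hsum_int : IntervalIntegrable
              (fun x => ∑ k ∈ Finset.range n, a * ((t-x)^(β-1) * g x k)) volume 0 t := by
            have h8 := IntervalIntegrable.sum (Finset.range n)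
              (f := fun k x => a * ((t-x)^(β-1) * g x k))
              (fun k _ => (hik k).const_mul a)
            have h9 : (∑ k ∈ Finset.range n, fun x => a * ((t-x)^(β-1) * g x k))
                = (fun x => ∑ k ∈ Finset.range n, a * ((t-x)^(β-1) * g x k)) := by
              ext x; simp
            exact h9 ▸ h8
          rw [intervalIntegral.integral_add hsum_int ((hik n).const_mul M)]
          rw [intervalIntegral.integral_finset_sum (fun k _ => (hik k).const_mul a)]
          simp only [intervalIntegral.integral_const_mul]
          rw [← Finset.mul_sum]
        calc f t ≤ a + b * ∫ s in (0:ℝ)..t, (t - s) ^ (β - 1) * f s := h1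
          _ ≤ a + b * ∫ s in (0:ℝ)..t, (t - s) ^ (β - 1) * φ s := by
              exact add_le_add_right (mul_le_mul_of_nonneg_left h2 hb) a
          _ = a + b * (a * (∑ k ∈ Finset.range n, ∫ s in (0:ℝ)..t, (t-s)^(β-1) * g s k)
              + M * ∫ s in (0:ℝ)..t, (t-s)^(β-1) * g s n) := by rw [h7]
          _ = a + (a * ∑ k ∈ Finset.range n, b * ∫ s in (0:ℝ)..t, (t-s)^(β-1) * g s k)
              + M * (b * ∫ s in (0:ℝ)..t, (t-s)^(β-1) * g s n) := by
              rw [← Finset.mul_sum]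
              ring
          _ = a + (a * ∑ k ∈ Finset.range n, g t (k+1)) + M * g t (n+1) := by
              simp only [hint]
          _ = a * (∑ k ∈ Finset.range (n+1), g t k) + M * g t (n+1) := by
              rw [Finset.sum_range_succ', hg0]
              ring
  -- conclusion
  intro t ht
  have hx : 0 ≤ b * G * t ^ β := by
    have := Real.rpow_nonneg ht.1 β
    positivity
  have hsummable : Summable (fun k : ℕ => (b*G*t^β)^k / Real.Gamma (β*(k:ℕ)+1)) :=
    ML_summable hβ hx
  refine ⟨hsummable, ?_⟩
  have hten : Filter.Tendsto (fun n => a * (∑ k ∈ Finset.range n, g t k) + M * g t n)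
      Filter.atTop (nhds (a * (∑' k, g t k) + M * 0)) := by
    apply Filter.Tendsto.add
    · exact (hsummable.hasSum.tendsto_sum_nat).const_mul a
    · exact (hsummable.tendsto_atTop_zero).const_mul M
  rw [mul_zero, add_zero] at hten
  exact ge_of_tendsto' hten (fun n => key n t ht)
end

section
/- For every p ∈ [1, ∞) there exists a constant C = C(p, ν) > 0 such that for all t > 0 and all x, x' ∈ ℝ, ‖G_t(x - ·) - G_t(x' - ·)‖_{L^p(ℝ)} ≤ C |x - x'| t^{-1/2} t^{-(1 - 1/p)/2}. -/
open Real MeasureTheory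

open ENNReal NNReal

lemma gauss_eLpNorm_le (p b c x : ℝ) (hp : 1 ≤ p) (hb : 0 < b) (hc : 0 ≤ c) :
    eLpNorm (fun y => c * Real.exp (-(b * (x - y) ^ 2))) (ENNReal.ofReal p) volume
      ≤ ENNReal.ofReal (c * (π / (p * b)) ^ (1 / (2 * p))) := by
  have hp0 : 0 < p := lt_of_lt_of_le one_pos hp
  have hq0 : ENNReal.ofReal p ≠ 0 := by
    simp [ENNReal.ofReal_eq_zero, not_le, hp0]
  have hpb : 0 < p * b := mul_pos hp0 hb
  rw [eLpNorm_eq_lintegral_rpow_enorm_toReal hq0 ENNReal.ofReal_ne_top,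
    ENNReal.toReal_ofReal hp0.le]
  have hnn : ∀ y : ℝ, 0 ≤ c * Real.exp (-(b * (x - y) ^ 2)) := fun y =>
    mul_nonneg hc (Real.exp_pos _).le
  have h1 : ∀ y : ℝ, ((‖c * Real.exp (-(b * (x - y) ^ 2))‖ₑ : ℝ≥0∞)) ^ p
      = ENNReal.ofReal (c ^ p * Real.exp (-(p * b) * (x - y) ^ 2)) := by
    intro y
    rw [Real.enorm_eq_ofReal (hnn y), ENNReal.ofReal_rpow_of_nonneg (hnn y) hp0.le,
      Real.mul_rpow hc (Real.exp_pos _).le, ← Real.exp_mul]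
    ring_nf
  simp_rw [h1]
  have hint : Integrable (fun y : ℝ => c ^ p * Real.exp (-(p * b) * (x - y) ^ 2)) volume := by
    apply Integrable.const_mul
    have := (integrable_exp_neg_mul_sq hpb)
    exact (this.comp_sub_left x)
  rw [← ofReal_integral_eq_lintegral_ofReal hint
      (Filter.Eventually.of_forall fun y =>
        mul_nonneg (Real.rpow_nonneg hc p) (Real.exp_pos _).le)]
  have hI : (∫ y : ℝ, c ^ p * Real.exp (-(p * b) * (x - y) ^ 2))
      = c ^ p * Real.sqrt (π / (p * b)) := by
    rw [integral_const_mul]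
    have := integral_sub_left_eq_self (fun z : ℝ => Real.exp (-(p * b) * z ^ 2)) volume x
    rw [this, integral_gaussian]
  rw [hI, ENNReal.ofReal_rpow_of_nonneg
      (mul_nonneg (Real.rpow_nonneg hc p) (Real.sqrt_nonneg _)) (by positivity)]
  apply le_of_eq
  congr 1
  rw [Real.mul_rpow (Real.rpow_nonneg hc p) (Real.sqrt_nonneg _),
    ← Real.rpow_mul hc, mul_one_div, div_self hp0.ne', Real.rpow_one,
    Real.sqrt_eq_rpow, ← Real.rpow_mul (by positivity)]
  congr 1
  field_simp

lemma G_hasDerivAt (ν t z : ℝ) :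
    HasDerivAt (G ν t)
      ((Real.sqrt (4 * π * ν * t))⁻¹ * (Real.exp (-z ^ 2 / (4 * ν * t)) * (-(2 * z) / (4 * ν * t)))) z := by
  have h1 : HasDerivAt (fun z : ℝ => -z ^ 2 / (4 * ν * t)) (-(2 * z) / (4 * ν * t)) z := by
    have := ((hasDerivAt_pow 2 z).div_const (4 * ν * t)).neg
    simp only [neg_div, pow_one, Nat.cast_ofNat, Nat.add_one_sub_one] at this ⊢
    exact this
  exact (h1.exp).const_mul _

lemma scalar_bound (ν t ξ : ℝ) (hν : 0 < ν) (ht : 0 < t) :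
    |ξ| / (2 * ν * t) * Real.exp (-ξ ^ 2 / (4 * ν * t)) ≤
      3 / (2 * (Real.sqrt ν * Real.sqrt t)) * Real.exp (-ξ ^ 2 / (8 * ν * t)) := by
  have hs : Real.sqrt ν * Real.sqrt t = Real.sqrt (ν * t) := (Real.sqrt_mul hν.le t).symm
  have hνt : 0 < ν * t := mul_pos hν ht
  have hsq : Real.sqrt (ν * t) ^ 2 = ν * t := Real.sq_sqrt hνt.le
  have hspos : 0 < Real.sqrt (ν * t) := Real.sqrt_pos.2 hνt
  have key : |ξ| * Real.exp (-ξ ^ 2 / (8 * ν * t)) ≤ 3 * Real.sqrt (ν * t) := by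
    rcases le_or_gt (|ξ|) (3 * Real.sqrt (ν * t)) with h | h
    · calc |ξ| * Real.exp (-ξ ^ 2 / (8 * ν * t)) ≤ |ξ| * 1 := by
            apply mul_le_mul_of_nonneg_left _ (abs_nonneg _)
            apply Real.exp_le_one_iff.2
            rw [neg_div]
            exact neg_nonpos.2 (by positivity)
        _ ≤ 3 * Real.sqrt (ν * t) := by rw [mul_one]; exact h
    · have hξpos : 0 < |ξ| := lt_trans (by positivity) h
      have hexp : Real.exp (-ξ ^ 2 / (8 * ν * t)) ≤ 8 * ν * t / ξ ^ 2 := by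
        rw [neg_div, Real.exp_neg]
        have h1 : ξ ^ 2 / (8 * ν * t) ≤ Real.exp (ξ ^ 2 / (8 * ν * t)) := by
          have := Real.add_one_le_exp (ξ ^ 2 / (8 * ν * t))
          linarith
        have hξ2 : 0 < ξ ^ 2 := by rw [← sq_abs]; positivity
        calc (Real.exp (ξ ^ 2 / (8 * ν * t)))⁻¹ ≤ (ξ ^ 2 / (8 * ν * t))⁻¹ :=
              inv_anti₀ (by positivity) h1
          _ = 8 * ν * t / ξ ^ 2 := by rw [inv_div]
      calc |ξ| * Real.exp (-ξ ^ 2 / (8 * ν * t)) ≤ |ξ| * (8 * ν * t / ξ ^ 2) :=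
            mul_le_mul_of_nonneg_left hexp (abs_nonneg _)
        _ = 8 * ν * t / |ξ| := by
            rw [show ξ ^ 2 = |ξ| * |ξ| from by rw [sq, ← abs_mul_abs_self]]
            set u := |ξ| with hu
            rw [eq_div_iff hξpos.ne']
            field_simp
        _ ≤ 8 * ν * t / (3 * Real.sqrt (ν * t)) :=
            div_le_div_of_nonneg_left (by positivity) (by positivity) h.le
        _ ≤ 3 * Real.sqrt (ν * t) := by
            rw [div_le_iff₀ (by positivity)]
            nlinarith
  have hsplit : Real.exp (-ξ ^ 2 / (4 * ν * t)) =
      Real.exp (-ξ ^ 2 / (8 * ν * t)) * Real.exp (-ξ ^ 2 / (8 * ν * t)) := by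
    rw [← Real.exp_add]; congr 1; field_simp; ring
  rw [hsplit, hs]
  have e8 : (0:ℝ) < Real.exp (-ξ ^ 2 / (8 * ν * t)) := Real.exp_pos _
  have heq : (3 : ℝ) * Real.sqrt (ν * t) / (2 * ν * t) = 3 / (2 * Real.sqrt (ν * t)) := by
    rw [div_eq_div_iff (by positivity) (by positivity)]
    nlinarith
  calc |ξ| / (2 * ν * t) * (Real.exp (-ξ ^ 2 / (8 * ν * t)) * Real.exp (-ξ ^ 2 / (8 * ν * t)))
      = (|ξ| * Real.exp (-ξ ^ 2 / (8 * ν * t))) / (2 * ν * t) * Real.exp (-ξ ^ 2 / (8 * ν * t)) := by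
        ring
    _ ≤ (3 * Real.sqrt (ν * t)) / (2 * ν * t) * Real.exp (-ξ ^ 2 / (8 * ν * t)) :=
        mul_le_mul_of_nonneg_right (div_le_div_of_nonneg_right key (by positivity)) e8.le
    _ = 3 / (2 * Real.sqrt (ν * t)) * Real.exp (-ξ ^ 2 / (8 * ν * t)) := by rw [heq]

lemma G_diff_pointwise (ν t : ℝ) (hν : 0 < ν) (ht : 0 < t) (x x' y : ℝ)
    (hxx : |x - x'| ≤ Real.sqrt t) :
    |G ν t (x - y) - G ν t (x' - y)| ≤
      |x - x'| * (3 / 2 * Real.exp (1 / (8 * ν)) * (Real.sqrt ν * Real.sqrt t)⁻¹ *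
        (Real.sqrt (4 * π * ν * t))⁻¹ * Real.exp (-((16 * ν * t)⁻¹ * (x - y) ^ 2))) := by
  set a := x - y with ha
  set b := x' - y with hb
  have hab : a - b = x - x' := by rw [ha, hb]; ring
  set c := (Real.sqrt (4 * π * ν * t))⁻¹ with hc
  have hc0 : 0 ≤ c := by positivity
  set K := 3 / 2 * Real.exp (1 / (8 * ν)) * (Real.sqrt ν * Real.sqrt t)⁻¹ * c *
      Real.exp (-((16 * ν * t)⁻¹ * a ^ 2)) with hK
  have bound : ∀ ξ ∈ Set.uIcc b a,
      ‖(Real.sqrt (4 * π * ν * t))⁻¹ *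
        (Real.exp (-ξ ^ 2 / (4 * ν * t)) * (-(2 * ξ) / (4 * ν * t)))‖ ≤ K := by
    intro ξ hξ
    have habs : |ξ - a| ≤ Real.sqrt t := by
      have h1 : |a - ξ| ≤ |a - b| := Set.abs_sub_right_of_mem_uIcc hξ
      rw [hab] at h1
      rw [abs_sub_comm]
      exact h1.trans hxx
    have hnorm : ‖c * (Real.exp (-ξ ^ 2 / (4 * ν * t)) * (-(2 * ξ) / (4 * ν * t)))‖
        = c * (Real.exp (-ξ ^ 2 / (4 * ν * t)) * (2 * |ξ| / (4 * ν * t))) := by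
      rw [Real.norm_eq_abs, abs_mul, abs_of_nonneg hc0, abs_mul,
        abs_of_pos (Real.exp_pos _), abs_div, abs_neg, abs_mul,
        abs_of_pos (by norm_num : (0:ℝ) < 2), abs_of_pos (by positivity : (0:ℝ) < 4 * ν * t)]
    rw [hnorm]
    have step1 : c * (Real.exp (-ξ ^ 2 / (4 * ν * t)) * (2 * |ξ| / (4 * ν * t)))
        = |ξ| / (2 * ν * t) * Real.exp (-ξ ^ 2 / (4 * ν * t)) * c := by
      field_simp
      ring
    rw [step1]
    have step2 := scalar_bound ν t ξ hν ht
    have step3 : Real.exp (-ξ ^ 2 / (8 * ν * t)) ≤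
        Real.exp (1 / (8 * ν)) * Real.exp (-((16 * ν * t)⁻¹ * a ^ 2)) := by
      rw [← Real.exp_add]
      apply Real.exp_le_exp.2
      have h1 : (a - ξ) ^ 2 ≤ t := by
        have h2 : |a - ξ| ≤ Real.sqrt t := by rw [abs_sub_comm]; exact habs
        nlinarith [abs_nonneg (a - ξ), sq_abs (a - ξ), Real.sq_sqrt ht.le,
          Real.sqrt_nonneg t]
      have h2 : a ^ 2 ≤ 2 * ξ ^ 2 + 2 * t := by nlinarith [sq_nonneg (ξ - (a - ξ))]
      have heq : 1 / (8 * ν) + -((16 * ν * t)⁻¹ * a ^ 2) + ξ ^ 2 / (8 * ν * t)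
          = (2 * ξ ^ 2 + 2 * t - a ^ 2) / (16 * ν * t) := by
        field_simp
        ring
      have hpos : 0 ≤ (2 * ξ ^ 2 + 2 * t - a ^ 2) / (16 * ν * t) :=
        div_nonneg (by linarith) (by positivity)
      rw [neg_div]
      linarith [heq, hpos]
    calc |ξ| / (2 * ν * t) * Real.exp (-ξ ^ 2 / (4 * ν * t)) * c
        ≤ 3 / (2 * (Real.sqrt ν * Real.sqrt t)) * Real.exp (-ξ ^ 2 / (8 * ν * t)) * c :=
          mul_le_mul_of_nonneg_right step2 hc0
      _ ≤ 3 / (2 * (Real.sqrt ν * Real.sqrt t)) *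
            (Real.exp (1 / (8 * ν)) * Real.exp (-((16 * ν * t)⁻¹ * a ^ 2))) * c := by
          apply mul_le_mul_of_nonneg_right _ hc0
          exact mul_le_mul_of_nonneg_left step3 (by positivity)
      _ = K := by rw [hK]; field_simp
  have mvt := (convex_uIcc b a).norm_image_sub_le_of_norm_hasDerivWithin_le
    (f := G ν t)
    (f' := fun ξ => (Real.sqrt (4 * π * ν * t))⁻¹ *
        (Real.exp (-ξ ^ 2 / (4 * ν * t)) * (-(2 * ξ) / (4 * ν * t))))
    (fun ξ _ => (G_hasDerivAt ν t ξ).hasDerivWithinAt) bound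
    (Set.left_mem_uIcc) (Set.right_mem_uIcc)
  rw [Real.norm_eq_abs, Real.norm_eq_abs] at mvt
  calc |G ν t a - G ν t b| ≤ K * |a - b| := mvt
    _ = |x - x'| * (3 / 2 * Real.exp (1 / (8 * ν)) * (Real.sqrt ν * Real.sqrt t)⁻¹ * c *
          Real.exp (-((16 * ν * t)⁻¹ * a ^ 2))) := by
        rw [hab, hK]; ring

/-- For every p ∈ [1, ∞) there exists C = C(p,ν) > 0 such that for all t > 0 and x, x' ∈ ℝ,
`‖G_t(x-·) - G_t(x'-·)‖_{L^p} ≤ C |x-x'| t^{-1/2} t^{-(1-1/p)/2}`. -/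
theorem heat_kernel_spatial_difference_Lp (ν p : ℝ) (hν : 0 < ν) (hp : 1 ≤ p) :
    ∃ C : ℝ, 0 < C ∧ ∀ t : ℝ, 0 < t → ∀ x x' : ℝ,
      eLpNorm (fun y => G ν t (x - y) - G ν t (x' - y)) (ENNReal.ofReal p) volume ≤
        ENNReal.ofReal (C * |x - x'| * t ^ (-(1 / 2) : ℝ) * t ^ (-((1 - 1 / p) / 2))) := by
  have hp0 : 0 < p := lt_of_lt_of_le one_pos hp
  have hπ : 0 < π := Real.pi_pos
  set A : ℝ := 2 * (Real.sqrt (4 * π * ν))⁻¹ * (4 * π * ν / p) ^ (1 / (2 * p)) with hA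
  set B : ℝ := 3 / 2 * Real.exp (1 / (8 * ν)) * (Real.sqrt ν)⁻¹ * (Real.sqrt (4 * π * ν))⁻¹ *
      (16 * π * ν / p) ^ (1 / (2 * p)) with hB
  have hApos : 0 < A := by positivity
  have hBpos : 0 < B := by positivity
  refine ⟨A + B, by positivity, ?_⟩
  intro t ht x x'
  have h4νt : (0:ℝ) < 4 * ν * t := by positivity
  -- common algebraic facts
  have e2 : (Real.sqrt t)⁻¹ = t ^ (-(1 / 2) : ℝ) := by
    rw [Real.sqrt_eq_rpow, ← Real.rpow_neg ht.le]
  have e1 : (Real.sqrt (4 * π * ν * t))⁻¹ = (Real.sqrt (4 * π * ν))⁻¹ * t ^ (-(1 / 2) : ℝ) := by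
    rw [Real.sqrt_mul (by positivity) t, mul_inv, e2]
  have e6 : t ^ (-(1 / 2) : ℝ) * t ^ (1 / (2 * p)) = t ^ (-((1 - 1 / p) / 2)) := by
    rw [← Real.rpow_add ht]
    congr 1
    field_simp
    ring
  have e5 : t ^ (1 / (2 * p)) = Real.sqrt t * t ^ (-((1 - 1 / p) / 2)) := by
    rw [Real.sqrt_eq_rpow, ← Real.rpow_add ht]
    congr 1
    field_simp
    ring
  have ht2 : (0:ℝ) < t ^ (-(1 / 2) : ℝ) := Real.rpow_pos_of_pos ht _
  have ht3 : (0:ℝ) < t ^ (-((1 - 1 / p) / 2)) := Real.rpow_pos_of_pos ht _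
  rcases le_or_gt (Real.sqrt t) |x - x'| with hcase | hcase
  · -- large increment: triangle inequality
    have hcont : ∀ z : ℝ, Continuous fun y : ℝ => G ν t (z - y) := by
      intro z
      simp only [G]
      fun_prop
    have hf : AEStronglyMeasurable (fun y : ℝ => G ν t (x - y)) volume :=
      (hcont x).aestronglyMeasurable
    have hg : AEStronglyMeasurable (fun y : ℝ => G ν t (x' - y)) volume :=
      (hcont x').aestronglyMeasurable
    have hq1 : 1 ≤ ENNReal.ofReal p := by
      rw [← ENNReal.ofReal_one]
      exact ENNReal.ofReal_le_ofReal hp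
    have htri := eLpNorm_sub_le hf hg hq1
    have hrw : ∀ z : ℝ, (fun y : ℝ => G ν t (z - y)) =
        fun y : ℝ => (Real.sqrt (4 * π * ν * t))⁻¹ *
          Real.exp (-((4 * ν * t)⁻¹ * (z - y) ^ 2)) := by
      intro z
      funext y
      simp only [G]
      congr 1
      congr 1
      field_simp
    have hone : ∀ z : ℝ,
        eLpNorm (fun y : ℝ => G ν t (z - y)) (ENNReal.ofReal p) volume ≤
          ENNReal.ofReal ((Real.sqrt (4 * π * ν * t))⁻¹ *
            (π / (p * (4 * ν * t)⁻¹)) ^ (1 / (2 * p))) := by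
      intro z
      rw [hrw z]
      exact gauss_eLpNorm_le p (4 * ν * t)⁻¹ _ z hp (by positivity) (by positivity)
    set M : ℝ := (Real.sqrt (4 * π * ν * t))⁻¹ * (π / (p * (4 * ν * t)⁻¹)) ^ (1 / (2 * p))
      with hM
    have hMnn : 0 ≤ M := by positivity
    have hfinal : M + M ≤ (A + B) * |x - x'| * t ^ (-(1 / 2) : ℝ) * t ^ (-((1 - 1 / p) / 2)) := by
      have e3 : π / (p * (4 * ν * t)⁻¹) = 4 * π * ν / p * t := by
        field_simp
      have hMeq : M + M = A * Real.sqrt t * (t ^ (-(1 / 2) : ℝ) * t ^ (-((1 - 1 / p) / 2))) := by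
        rw [hM, e3, Real.mul_rpow (by positivity) ht.le, e1, e5, hA]
        ring
      rw [hMeq]
      calc A * Real.sqrt t * (t ^ (-(1 / 2) : ℝ) * t ^ (-((1 - 1 / p) / 2)))
          ≤ (A + B) * |x - x'| * (t ^ (-(1 / 2) : ℝ) * t ^ (-((1 - 1 / p) / 2))) := by
            gcongr <;> first | positivity | linarith [hcase]
        _ = (A + B) * |x - x'| * t ^ (-(1 / 2) : ℝ) * t ^ (-((1 - 1 / p) / 2)) := by ring
    calc eLpNorm (fun y => G ν t (x - y) - G ν t (x' - y)) (ENNReal.ofReal p) volume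
        ≤ eLpNorm (fun y : ℝ => G ν t (x - y)) (ENNReal.ofReal p) volume +
            eLpNorm (fun y : ℝ => G ν t (x' - y)) (ENNReal.ofReal p) volume := htri
      _ ≤ ENNReal.ofReal M + ENNReal.ofReal M := add_le_add (hone x) (hone x')
      _ = ENNReal.ofReal (M + M) := (ENNReal.ofReal_add hMnn hMnn).symm
      _ ≤ ENNReal.ofReal ((A + B) * |x - x'| * t ^ (-(1 / 2) : ℝ) * t ^ (-((1 - 1 / p) / 2))) :=
          ENNReal.ofReal_le_ofReal hfinal
  · -- small increment: mean value theorem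
    set c' : ℝ := |x - x'| * (3 / 2 * Real.exp (1 / (8 * ν)) * (Real.sqrt ν * Real.sqrt t)⁻¹ *
        (Real.sqrt (4 * π * ν * t))⁻¹) with hc'
    have hc'nn : 0 ≤ c' := by positivity
    have hptw : ∀ y : ℝ, ‖G ν t (x - y) - G ν t (x' - y)‖ ≤
        c' * Real.exp (-((16 * ν * t)⁻¹ * (x - y) ^ 2)) := by
      intro y
      rw [Real.norm_eq_abs]
      have := G_diff_pointwise ν t hν ht x x' y hcase.le
      calc |G ν t (x - y) - G ν t (x' - y)|
          ≤ |x - x'| * (3 / 2 * Real.exp (1 / (8 * ν)) * (Real.sqrt ν * Real.sqrt t)⁻¹ *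
              (Real.sqrt (4 * π * ν * t))⁻¹ * Real.exp (-((16 * ν * t)⁻¹ * (x - y) ^ 2))) := this
        _ = c' * Real.exp (-((16 * ν * t)⁻¹ * (x - y) ^ 2)) := by rw [hc']; ring
    have hmono := eLpNorm_mono_real (μ := volume) (p := ENNReal.ofReal p) hptw
    have hgauss := gauss_eLpNorm_le p (16 * ν * t)⁻¹ c' x hp (by positivity) hc'nn
    have hfinal : c' * (π / (p * (16 * ν * t)⁻¹)) ^ (1 / (2 * p)) ≤
        (A + B) * |x - x'| * t ^ (-(1 / 2) : ℝ) * t ^ (-((1 - 1 / p) / 2)) := by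
      have e3 : π / (p * (16 * ν * t)⁻¹) = 16 * π * ν / p * t := by
        field_simp
      have heq : c' * (π / (p * (16 * ν * t)⁻¹)) ^ (1 / (2 * p))
          = B * |x - x'| * t ^ (-(1 / 2) : ℝ) * t ^ (-((1 - 1 / p) / 2)) := by
        rw [hc', e3, Real.mul_rpow (by positivity) ht.le, e1, mul_inv, e2, hB, ← e6]
        ring
      rw [heq]
      have : 0 ≤ |x - x'| := abs_nonneg _
      nlinarith [mul_pos ht2 ht3, mul_nonneg (mul_nonneg hApos.le this) (mul_pos ht2 ht3).le]
    calc eLpNorm (fun y => G ν t (x - y) - G ν t (x' - y)) (ENNReal.ofReal p) volume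
        ≤ eLpNorm (fun y : ℝ => c' * Real.exp (-((16 * ν * t)⁻¹ * (x - y) ^ 2)))
            (ENNReal.ofReal p) volume := hmono
      _ ≤ ENNReal.ofReal (c' * (π / (p * (16 * ν * t)⁻¹)) ^ (1 / (2 * p))) := hgauss
      _ ≤ ENNReal.ofReal ((A + B) * |x - x'| * t ^ (-(1 / 2) : ℝ) * t ^ (-((1 - 1 / p) / 2))) :=
          ENNReal.ofReal_le_ofReal hfinal
end

section
/- There exists a constant C > 0, depending only on ν, such that for every u₀ ∈ L^∞(ℝ), all 0 < s < t and every x ∈ ℝ, |(G_t * u₀)(x) - (G_s * u₀)(x)| ≤ C ‖u₀‖_{L^∞(ℝ)} (t - s) s^{-3/2} t^{1/2}. -/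
open Real MeasureTheory

namespace HeatAux

lemma integrable_sq_gauss {b : ℝ} (hb : 0 < b) :
    Integrable (fun x : ℝ => x ^ 2 * Real.exp (-b * x ^ 2)) := by
  have h := integrable_rpow_mul_exp_neg_mul_sq hb (s := 2) (by norm_num)
  have : (fun x : ℝ => x ^ (2:ℝ) * Real.exp (-b * x ^ 2))
      = fun x : ℝ => x ^ 2 * Real.exp (-b * x ^ 2) := by
    funext x
    rw [show (2:ℝ) = ((2:ℕ):ℝ) by norm_num, Real.rpow_natCast]
  rwa [this] at h

lemma integral_sq_gauss {b : ℝ} (hb : 0 < b) :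
    ∫ x : ℝ, x ^ 2 * Real.exp (-b * x ^ 2) = Real.sqrt (π / b) / (2 * b) := by
  have hderiv : ∀ x : ℝ, HasDerivAt (fun x : ℝ => x * Real.exp (-b * x ^ 2))
      (Real.exp (-b * x ^ 2) - 2 * b * (x ^ 2 * Real.exp (-b * x ^ 2))) x := by
    intro x
    have h1 : HasDerivAt (fun x : ℝ => -b * x ^ 2) (-b * (2 * x)) x := by
      simpa using ((hasDerivAt_pow 2 x).const_mul (-b))
    have h2 := ((hasDerivAt_id x).mul h1.exp)
    refine HasDerivAt.congr_deriv (h2 : HasDerivAt (fun x : ℝ => x * Real.exp (-b * x ^ 2)) _ x) ?_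
    simp only [id_eq]
    ring
  have hf : Integrable (fun x : ℝ => x * Real.exp (-b * x ^ 2)) :=
    integrable_mul_exp_neg_mul_sq hb
  have hf' : Integrable (fun x : ℝ =>
      Real.exp (-b * x ^ 2) - 2 * b * (x ^ 2 * Real.exp (-b * x ^ 2))) :=
    (integrable_exp_neg_mul_sq hb).sub ((integrable_sq_gauss hb).const_mul _)
  have h0 := integral_eq_zero_of_hasDerivAt_of_integrable hderiv hf' hf
  rw [integral_sub (integrable_exp_neg_mul_sq hb) ((integrable_sq_gauss hb).const_mul _),
    integral_const_mul, integral_gaussian] at h0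
  have hb' : (2 * b) ≠ 0 := by positivity
  field_simp at h0 ⊢
  linarith

variable {ν s t : ℝ}

lemma exp_eq (ν t x : ℝ) :
    Real.exp (-x ^ 2 / (4 * ν * t)) = Real.exp (-(1 / (4 * ν * t)) * x ^ 2) := by
  congr 1; ring

lemma G_nonneg (hν : 0 < ν) (ht : 0 < t) (x : ℝ) : 0 ≤ G ν t x := by
  unfold G; positivity

lemma integrable_G (hν : 0 < ν) (ht : 0 < t) : Integrable (G ν t) := by
  have hb : 0 < 1 / (4 * ν * t) := by positivity
  have : G ν t = fun x => (Real.sqrt (4 * π * ν * t))⁻¹ *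
      Real.exp (-(1 / (4 * ν * t)) * x ^ 2) := by
    funext x; rw [G, exp_eq]
  rw [this]
  exact (integrable_exp_neg_mul_sq hb).const_mul _

lemma integral_G (hν : 0 < ν) (ht : 0 < t) : ∫ x, G ν t x = 1 := by
  have hb : 0 < 1 / (4 * ν * t) := by positivity
  have h : ∫ x, G ν t x = (Real.sqrt (4 * π * ν * t))⁻¹ *
      ∫ x, Real.exp (-(1 / (4 * ν * t)) * x ^ 2) := by
    rw [← integral_const_mul]
    congr 1; funext x; rw [G, exp_eq]
  rw [h, integral_gaussian]
  have h2 : π / (1 / (4 * ν * t)) = 4 * π * ν * t := by field_simp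
  rw [h2]
  rw [inv_mul_cancel₀]
  positivity

lemma continuous_G (ν t : ℝ) : Continuous (G ν t) := by
  unfold G
  fun_prop

lemma hasDerivAt_G (hν : 0 < ν) (y : ℝ) {τ : ℝ} (hτ : 0 < τ) :
    HasDerivAt (fun r => G ν r y)
      (Real.exp (-y ^ 2 / (4 * ν * τ)) *
        ((Real.sqrt (4 * π * ν * τ))⁻¹ * (y ^ 2 / (4 * ν * τ ^ 2) - (2 * τ)⁻¹))) τ := by
  have hc : 0 < 4 * π * ν * τ := by positivity
  have hsq : Real.sqrt (4 * π * ν * τ) ≠ 0 := by positivity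
  have h1 : HasDerivAt (fun r : ℝ => 4 * π * ν * r) (4 * π * ν) τ := by
    simpa using (hasDerivAt_id τ).const_mul (4 * π * ν)
  have h2 : HasDerivAt (fun r : ℝ => Real.sqrt (4 * π * ν * r))
      ((1 / (2 * Real.sqrt (4 * π * ν * τ))) * (4 * π * ν)) τ :=
    (Real.hasDerivAt_sqrt hc.ne').comp τ h1
  have h3 : HasDerivAt (fun r : ℝ => (Real.sqrt (4 * π * ν * r))⁻¹)
      (-((1 / (2 * Real.sqrt (4 * π * ν * τ))) * (4 * π * ν)) /
        (Real.sqrt (4 * π * ν * τ)) ^ 2) τ := h2.inv hsq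
  have h4 : HasDerivAt (fun r : ℝ => -y ^ 2 / (4 * ν) * r⁻¹)
      (-y ^ 2 / (4 * ν) * -(τ ^ 2)⁻¹) τ := (hasDerivAt_inv hτ.ne').const_mul _
  have h5 : HasDerivAt (fun r : ℝ => Real.exp (-y ^ 2 / (4 * ν * r)))
      (Real.exp (-y ^ 2 / (4 * ν * τ)) * (y ^ 2 / (4 * ν * τ ^ 2))) τ := by
    have h := h4.exp
    have e1 : ∀ r : ℝ, -y ^ 2 / (4 * ν) * r⁻¹ = -y ^ 2 / (4 * ν * r) := fun r => by ring
    simp only [e1] at h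
    convert h using 2
    ring
  have h6 := h3.mul h5
  refine HasDerivAt.congr_deriv (h6 : HasDerivAt (fun r => G ν r y) _ τ) ?_
  set u := Real.sqrt (4 * π * ν * τ) with hu
  have hs2 : u ^ 2 = 4 * π * ν * τ := Real.sq_sqrt hc.le
  rw [hs2]
  have hπ := Real.pi_pos
  field_simp
  ring


lemma G_diff_bound (hν : 0 < ν) (hs : 0 < s) (hst : s < t) (y : ℝ) :
    |G ν t y - G ν s y| ≤ (t - s) * (Real.exp (-y ^ 2 / (4 * ν * t)) *
      ((Real.sqrt (4 * π * ν * s))⁻¹ * (y ^ 2 / (4 * ν * s ^ 2) + (2 * s)⁻¹))) := by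
  have ht : 0 < t := hs.trans hst
  set C : ℝ := Real.exp (-y ^ 2 / (4 * ν * t)) *
      ((Real.sqrt (4 * π * ν * s))⁻¹ * (y ^ 2 / (4 * ν * s ^ 2) + (2 * s)⁻¹)) with hC
  have key : ∀ τ ∈ Set.Icc s t,
      ‖Real.exp (-y ^ 2 / (4 * ν * τ)) *
        ((Real.sqrt (4 * π * ν * τ))⁻¹ * (y ^ 2 / (4 * ν * τ ^ 2) - (2 * τ)⁻¹))‖ ≤ C := by
    rintro τ ⟨hτs, hτt⟩
    have hτ : 0 < τ := hs.trans_le hτs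
    have h1 : 0 ≤ y ^ 2 / (4 * ν * τ ^ 2) := by positivity
    have h2 : 0 ≤ (2 * τ)⁻¹ := by positivity
    calc ‖Real.exp (-y ^ 2 / (4 * ν * τ)) *
        ((Real.sqrt (4 * π * ν * τ))⁻¹ * (y ^ 2 / (4 * ν * τ ^ 2) - (2 * τ)⁻¹))‖
        = Real.exp (-y ^ 2 / (4 * ν * τ)) *
          ((Real.sqrt (4 * π * ν * τ))⁻¹ * |y ^ 2 / (4 * ν * τ ^ 2) - (2 * τ)⁻¹|) := by
          rw [Real.norm_eq_abs, abs_mul, abs_of_pos (Real.exp_pos _), abs_mul,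
            abs_of_nonneg (by positivity : (0:ℝ) ≤ (Real.sqrt (4 * π * ν * τ))⁻¹)]
      _ ≤ Real.exp (-y ^ 2 / (4 * ν * τ)) *
          ((Real.sqrt (4 * π * ν * τ))⁻¹ * (y ^ 2 / (4 * ν * τ ^ 2) + (2 * τ)⁻¹)) := by
          gcongr
          exact abs_le.2 ⟨by linarith, by linarith⟩
      _ ≤ C := by
          rw [hC]
          have e1 : Real.exp (-y ^ 2 / (4 * ν * τ)) ≤ Real.exp (-y ^ 2 / (4 * ν * t)) := by
            apply Real.exp_le_exp.2
            rw [neg_div, neg_div, neg_le_neg_iff]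
            gcongr <;> first | positivity | nlinarith
          have e2 : (Real.sqrt (4 * π * ν * τ))⁻¹ ≤ (Real.sqrt (4 * π * ν * s))⁻¹ := by
            gcongr <;> first
              | positivity
              | nlinarith [Real.pi_pos, mul_pos (mul_pos (by norm_num : (0:ℝ) < 4) Real.pi_pos) hν]
          have e3 : y ^ 2 / (4 * ν * τ ^ 2) ≤ y ^ 2 / (4 * ν * s ^ 2) := by
            gcongr <;> first | positivity | nlinarith
          have e4 : (2 * τ)⁻¹ ≤ (2 * s)⁻¹ := by
            gcongr <;> first | positivity | linarith
          exact mul_le_mul e1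
            (mul_le_mul e2 (add_le_add e3 e4) (by positivity) (by positivity))
            (by positivity) (Real.exp_pos _).le
  have hmem_s : s ∈ Set.Icc s t := ⟨le_rfl, hst.le⟩
  have hmem_t : t ∈ Set.Icc s t := ⟨hst.le, le_rfl⟩
  have := Convex.norm_image_sub_le_of_norm_hasDerivWithin_le
    (f := fun r => G ν r y)
    (f' := fun τ => Real.exp (-y ^ 2 / (4 * ν * τ)) *
        ((Real.sqrt (4 * π * ν * τ))⁻¹ * (y ^ 2 / (4 * ν * τ ^ 2) - (2 * τ)⁻¹)))
    (fun τ hτ => (hasDerivAt_G hν y (hs.trans_le hτ.1)).hasDerivWithinAt)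
    key (convex_Icc s t) hmem_s hmem_t
  rw [Real.norm_eq_abs, Real.norm_eq_abs, abs_of_nonneg (by linarith : (0:ℝ) ≤ t - s)] at this
  linarith [this]

lemma integrable_H (hν : 0 < ν) (hs : 0 < s) (ht : 0 < t) :
    Integrable (fun y : ℝ => Real.exp (-y ^ 2 / (4 * ν * t)) *
      ((Real.sqrt (4 * π * ν * s))⁻¹ * (y ^ 2 / (4 * ν * s ^ 2) + (2 * s)⁻¹))) := by
  have hb : 0 < 1 / (4 * ν * t) := by positivity
  have heq : (fun y : ℝ => Real.exp (-y ^ 2 / (4 * ν * t)) *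
      ((Real.sqrt (4 * π * ν * s))⁻¹ * (y ^ 2 / (4 * ν * s ^ 2) + (2 * s)⁻¹)))
      = fun y : ℝ => ((Real.sqrt (4 * π * ν * s))⁻¹ / (4 * ν * s ^ 2)) *
          (y ^ 2 * Real.exp (-(1 / (4 * ν * t)) * y ^ 2)) +
        ((Real.sqrt (4 * π * ν * s))⁻¹ * (2 * s)⁻¹) *
          Real.exp (-(1 / (4 * ν * t)) * y ^ 2) := by
    funext y; rw [exp_eq]; ring
  rw [heq]
  exact ((integrable_sq_gauss hb).const_mul _).add ((integrable_exp_neg_mul_sq hb).const_mul _)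

lemma integral_H (hν : 0 < ν) (hs : 0 < s) (ht : 0 < t) :
    ∫ y : ℝ, Real.exp (-y ^ 2 / (4 * ν * t)) *
      ((Real.sqrt (4 * π * ν * s))⁻¹ * (y ^ 2 / (4 * ν * s ^ 2) + (2 * s)⁻¹))
      = Real.sqrt (4 * π * ν * t) / Real.sqrt (4 * π * ν * s) *
        (t / (2 * s ^ 2) + 1 / (2 * s)) := by
  have hb : 0 < 1 / (4 * ν * t) := by positivity
  have heq : (fun y : ℝ => Real.exp (-y ^ 2 / (4 * ν * t)) *
      ((Real.sqrt (4 * π * ν * s))⁻¹ * (y ^ 2 / (4 * ν * s ^ 2) + (2 * s)⁻¹)))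
      = fun y : ℝ => ((Real.sqrt (4 * π * ν * s))⁻¹ / (4 * ν * s ^ 2)) *
          (y ^ 2 * Real.exp (-(1 / (4 * ν * t)) * y ^ 2)) +
        ((Real.sqrt (4 * π * ν * s))⁻¹ * (2 * s)⁻¹) *
          Real.exp (-(1 / (4 * ν * t)) * y ^ 2) := by
    funext y; rw [exp_eq]; ring
  rw [heq, integral_add (((integrable_sq_gauss hb).const_mul _))
      ((integrable_exp_neg_mul_sq hb).const_mul _),
    integral_const_mul, integral_const_mul, integral_sq_gauss hb, integral_gaussian]
  have h2 : π / (1 / (4 * ν * t)) = 4 * π * ν * t := by field_simp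
  rw [h2]
  have hνt : (0:ℝ) < 4 * ν * t := by positivity
  field_simp


end HeatAux

/-- There is C > 0 depending only on ν such that for every u₀ ∈ L^∞(ℝ), 0 < s < t, x ∈ ℝ,
`|(G_t * u₀)(x) - (G_s * u₀)(x)| ≤ C ‖u₀‖_{L^∞} (t - s) s^{-3/2} t^{1/2}`. -/
theorem heat_semigroup_time_difference_bound (ν : ℝ) (hν : 0 < ν) :
    ∃ C : ℝ, 0 < C ∧ ∀ u₀ : ℝ → ℝ, MeasureTheory.MemLp u₀ ⊤ volume →
      ∀ s t : ℝ, 0 < s → s < t → ∀ x : ℝ,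
        |(∫ z : ℝ, G ν t (x - z) * u₀ z) - ∫ z : ℝ, G ν s (x - z) * u₀ z| ≤
          C * (MeasureTheory.eLpNorm u₀ ⊤ volume).toReal * (t - s) *
            s ^ (-(3 / 2) : ℝ) * t ^ ((1 / 2) : ℝ) := by
  refine ⟨2, by norm_num, ?_⟩
  intro u₀ hu s t hs hst x
  have ht : 0 < t := hs.trans hst
  set M := (MeasureTheory.eLpNorm u₀ ⊤ volume).toReal with hM
  have hM0 : 0 ≤ M := ENNReal.toReal_nonneg
  have hbdd : ∀ᵐ z : ℝ, |u₀ z| ≤ M := by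
    have h1 := ae_le_eLpNormEssSup (f := u₀) (μ := volume)
    have hfin : eLpNormEssSup u₀ volume ≠ ⊤ := by
      rw [← eLpNorm_exponent_top]; exact hu.2.ne
    filter_upwards [h1] with z hz
    have h2 := ENNReal.toReal_mono hfin hz
    simpa [hM, eLpNorm_exponent_top, Real.norm_eq_abs] using h2
  have h32 : s ^ (-(3 / 2) : ℝ) = (s * Real.sqrt s)⁻¹ := by
    rw [show (-(3 / 2) : ℝ) = -(1 + 1 / 2) by norm_num, Real.rpow_neg hs.le,
      Real.rpow_add hs, Real.rpow_one, ← Real.sqrt_eq_rpow]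
  have h12 : t ^ ((1 / 2) : ℝ) = Real.sqrt t := (Real.sqrt_eq_rpow t).symm
  have ha0 : 0 < Real.sqrt s := Real.sqrt_pos.2 hs
  have hb0 : 0 < Real.sqrt t := Real.sqrt_pos.2 ht
  have ha2 : Real.sqrt s ^ 2 = s := Real.sq_sqrt hs.le
  have hb2 : Real.sqrt t ^ 2 = t := Real.sq_sqrt ht.le
  rcases le_or_gt t (2 * s) with hcase | hcase
  · -- near case : t ≤ 2 s, use the mean value theorem bound
    set H : ℝ → ℝ := fun y => Real.exp (-y ^ 2 / (4 * ν * t)) *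
      ((Real.sqrt (4 * π * ν * s))⁻¹ * (y ^ 2 / (4 * ν * s ^ 2) + (2 * s)⁻¹)) with hH
    have hHint : Integrable H := HeatAux.integrable_H hν hs ht
    have hGint : ∀ τ : ℝ, 0 < τ → Integrable (fun z => G ν τ (x - z) * u₀ z) := by
      intro τ hτ
      refine Integrable.mono' (((HeatAux.integrable_G hν hτ).comp_sub_left x).mul_const M)
        (((HeatAux.continuous_G ν τ).comp
          (continuous_const.sub continuous_id)).aestronglyMeasurable.mul
          hu.aestronglyMeasurable) ?_
      filter_upwards [hbdd] with z hz
      rw [Real.norm_eq_abs, abs_mul, abs_of_nonneg (HeatAux.G_nonneg hν hτ _)]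
      exact mul_le_mul_of_nonneg_left hz (HeatAux.G_nonneg hν hτ _)
    have hdiff : (∫ z : ℝ, G ν t (x - z) * u₀ z) - ∫ z : ℝ, G ν s (x - z) * u₀ z
        = ∫ z : ℝ, (G ν t (x - z) - G ν s (x - z)) * u₀ z := by
      rw [← integral_sub (hGint t ht) (hGint s hs)]
      congr 1; funext z; ring
    have key : |∫ z : ℝ, (G ν t (x - z) - G ν s (x - z)) * u₀ z|
        ≤ ∫ z : ℝ, (M * (t - s)) * H (x - z) := by
      rw [← Real.norm_eq_abs]
      refine norm_integral_le_of_norm_le ((hHint.comp_sub_left x).const_mul _) ?_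
      filter_upwards [hbdd] with z hz
      rw [Real.norm_eq_abs, abs_mul]
      calc |G ν t (x - z) - G ν s (x - z)| * |u₀ z|
          ≤ ((t - s) * H (x - z)) * M :=
            mul_le_mul (HeatAux.G_diff_bound hν hs hst _) hz (abs_nonneg _)
              (by
                have : 0 ≤ H (x - z) := by rw [hH]; positivity
                nlinarith)
        _ = (M * (t - s)) * H (x - z) := by ring
    have hIH : ∫ y : ℝ, H y = Real.sqrt (4 * π * ν * t) / Real.sqrt (4 * π * ν * s) *
        (t / (2 * s ^ 2) + 1 / (2 * s)) := HeatAux.integral_H hν hs ht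
    have hratio : Real.sqrt (4 * π * ν * t) / Real.sqrt (4 * π * ν * s)
        = Real.sqrt t / Real.sqrt s := by
      rw [Real.sqrt_mul (by positivity : (0:ℝ) ≤ 4 * π * ν) t,
        Real.sqrt_mul (by positivity : (0:ℝ) ≤ 4 * π * ν) s,
        mul_div_mul_left _ _ (by positivity : Real.sqrt (4 * π * ν) ≠ 0)]
    have hstep : Real.sqrt t / Real.sqrt s * (t / (2 * s ^ 2) + 1 / (2 * s))
        ≤ 2 * ((s * Real.sqrt s)⁻¹ * Real.sqrt t) := by
      set a := Real.sqrt s with hadef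
      set b := Real.sqrt t with hbdef
      rw [← ha2, ← hb2] at hcase ⊢
      have h4 : b ^ 2 ≤ 2 * a ^ 2 := hcase
      have hLL : b / a * (b ^ 2 / (2 * (a ^ 2) ^ 2) + 1 / (2 * a ^ 2))
          = (b * (b ^ 2 + a ^ 2)) / (2 * a ^ 5) := by
        field_simp
      have hRR : 2 * ((a ^ 2 * a)⁻¹ * b) = (2 * b) / a ^ 3 := by
        field_simp
      rw [hLL, hRR, div_le_div_iff₀ (by positivity) (by positivity)]
      nlinarith [mul_pos ha0 hb0,
        mul_le_mul_of_nonneg_right h4 (mul_pos (pow_pos ha0 3) hb0).le]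
    rw [hdiff, h32, h12]
    calc |∫ z : ℝ, (G ν t (x - z) - G ν s (x - z)) * u₀ z|
        ≤ ∫ z : ℝ, (M * (t - s)) * H (x - z) := key
      _ = (M * (t - s)) * ∫ z : ℝ, H (x - z) := integral_const_mul _ _
      _ = (M * (t - s)) * (Real.sqrt t / Real.sqrt s * (t / (2 * s ^ 2) + 1 / (2 * s))) := by
          rw [integral_sub_left_eq_self H volume x, hIH, hratio]
      _ ≤ (M * (t - s)) * (2 * ((s * Real.sqrt s)⁻¹ * Real.sqrt t)) := by
          apply mul_le_mul_of_nonneg_left hstep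
          have : 0 ≤ t - s := by linarith
          positivity
      _ = 2 * M * (t - s) * (s * Real.sqrt s)⁻¹ * Real.sqrt t := by ring
  · -- far case : 2 s < t, use the trivial bound
    have hb1 : ∀ τ : ℝ, 0 < τ → |∫ z : ℝ, G ν τ (x - z) * u₀ z| ≤ M := by
      intro τ hτ
      have hineq : ∀ᵐ z : ℝ, ‖G ν τ (x - z) * u₀ z‖ ≤ G ν τ (x - z) * M := by
        filter_upwards [hbdd] with z hz
        rw [Real.norm_eq_abs, abs_mul, abs_of_nonneg (HeatAux.G_nonneg hν hτ _)]
        exact mul_le_mul_of_nonneg_left hz (HeatAux.G_nonneg hν hτ _)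
      have h := norm_integral_le_of_norm_le
        (((HeatAux.integrable_G hν hτ).comp_sub_left x).mul_const M) hineq
      rw [Real.norm_eq_abs] at h
      refine h.trans ?_
      rw [integral_mul_const, integral_sub_left_eq_self (G ν τ) volume x,
        HeatAux.integral_G hν hτ, one_mul]
    have h1 : 1 ≤ (t - s) * ((s * Real.sqrt s)⁻¹ * Real.sqrt t) := by
      set a := Real.sqrt s with hadef
      set b := Real.sqrt t with hbdef
      rw [← ha2, ← hb2] at hcase ⊢
      have hab : a ≤ b := by nlinarith
      have heq : (b ^ 2 - a ^ 2) * ((a ^ 2 * a)⁻¹ * b) = ((b ^ 2 - a ^ 2) * b) / (a ^ 2 * a) := by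
        ring
      rw [heq, le_div_iff₀ (by positivity), one_mul]
      nlinarith [mul_le_mul_of_nonneg_left hab (sq_nonneg a),
        mul_le_mul_of_nonneg_right hcase.le hb0.le]
    calc |(∫ z : ℝ, G ν t (x - z) * u₀ z) - ∫ z : ℝ, G ν s (x - z) * u₀ z|
        ≤ |∫ z : ℝ, G ν t (x - z) * u₀ z| + |∫ z : ℝ, G ν s (x - z) * u₀ z| := abs_sub _ _
      _ ≤ M + M := add_le_add (hb1 t ht) (hb1 s hs)
      _ = 2 * M * 1 := by ring
      _ ≤ 2 * M * ((t - s) * ((s * Real.sqrt s)⁻¹ * Real.sqrt t)) := by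
          apply mul_le_mul_of_nonneg_left h1
          linarith
      _ = 2 * M * (t - s) * s ^ (-(3 / 2) : ℝ) * t ^ ((1 / 2) : ℝ) := by
          rw [h32, h12]; ring
end
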